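/- arXiv:1509.06549 — 5 statements merged into one kernel-verified Lean document; each statement's English description precedes it below -/
import Mathlib

section
/- Let D be the group on 𝔽₂³ with multiplication (a₁,b₁,c₁)·(a₂,b₂,c₂) = (a₁+a₂, b₁+b₂, c₁+c₂+b₁a₂+b₁b₂). Define Ξ : D² → 𝔽₂ by Ξ(g₁,g₂) = c₁c₂ + b₁a₂c₂ + b₁c₁a₂ + b₁b₂c₂ + b₁c₁b₂ + c₁a₂ + b₁a₂b₂. Then Ξ is a 2-cocycle: for all g₁,g₂,g₃ ∈ D, Ξ(g₂,g₃) + Ξ(g₁g₂,g₃) + Ξ(g₁,g₂g₃) + Ξ(g₁,g₂) = 0. -/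
abbrev F2 := ZMod 2

/-- The dihedral group of order 8 on 𝔽₂³. -/
def D3 : Type := F2 × F2 × F2

instance : DecidableEq D3 := inferInstanceAs (DecidableEq (F2 × F2 × F2))
instance : Fintype D3 := inferInstanceAs (Fintype (F2 × F2 × F2))

def dmul : D3 → D3 → D3
  | (a1,b1,c1), (a2,b2,c2) => (a1+a2, b1+b2, c1+c2+b1*a2+b1*b2)

instance : Group D3 where
  mul := dmul
  one := ((0,0,0) : D3)
  inv := fun (x : F2 × F2 × F2) => ((x.1, x.2.1, x.2.2 + x.2.1*x.1 + x.2.1*x.2.1) : D3)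
  mul_assoc := fun x y z => by
    obtain ⟨a1,b1,c1⟩ := x; obtain ⟨a2,b2,c2⟩ := y; obtain ⟨a3,b3,c3⟩ := z
    show dmul (dmul _ _) _ = dmul _ (dmul _ _)
    simp only [dmul]
    exact Prod.ext (by ring) (Prod.ext (by ring) (by ring))
  one_mul := by decide
  mul_one := by decide
  inv_mul_cancel := by decide

def aD : D3 → F2 | (a,_,_) => a
def bD : D3 → F2 | (_,b,_) => b
def cD : D3 → F2 | (_,_,c) => c

/-- The 2-cochain `Ξ` on `D₈`. -/
def Xi (g1 g2 : D3) : F2 :=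
  cD g1 * cD g2 + bD g1 * aD g2 * cD g2 + bD g1 * cD g1 * aD g2
    + bD g1 * bD g2 * cD g2 + bD g1 * cD g1 * bD g2 + cD g1 * aD g2
    + bD g1 * aD g2 * bD g2

theorem aD_mul (g h : D3) : aD (g * h) = aD g + aD h := rfl

theorem bD_mul (g h : D3) : bD (g * h) = bD g + bD h := rfl

theorem cD_mul (g h : D3) : cD (g * h) = cD g + cD h + bD g * aD h + bD g * bD h := rfl

/-- `Ξ` is a 2-cocycle on `D₈` with trivial 𝔽₂ coefficients. -/
theorem stmt_8 :
    ∀ g1 g2 g3 : D3, Xi g2 g3 + Xi (g1 * g2) g3 + Xi g1 (g2 * g3) + Xi g1 g2 = 0 := by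
  intro g1 g2 g3
  simp only [Xi, aD_mul, bD_mul, cD_mul]
  -- `reduce_mod_char` recognizes `ZMod 2` but not the abbreviation `F2`.
  unfold F2
  -- As a polynomial in the nine coordinates the coboundary is not zero mod 2: it equals
  -- (b₁² - b₁)(a₂ + b₂)(a₃ + b₃) + b₁b₂(a₃² - a₃ + b₃² - b₃), which vanishes since x² = x on 𝔽₂.
  linear_combination (norm := (ring_nf; reduce_mod_char))
    (aD g2 + bD g2) * (aD g3 + bD g3) * ZMod.pow_card (bD g1)
      + bD g1 * bD g2 * (ZMod.pow_card (aD g3) + ZMod.pow_card (bD g3))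
end

section
/- Let H be the group 16Γ₂c₂ on 𝔽₂⁴ with multiplication (a₁,b₁,c₁,d₁)·(a₂,b₂,c₂,d₂) = (a₁+a₂, b₁+b₂, c₁+c₂+b₁a₂+b₁b₂, d₁+d₂+a₁a₂). Define x : H² → 𝔽₂ by x(g₁,g₂) = d₁d₂ + a₁a₂d₂ + a₁d₁a₂. Then x is a 2-cocycle: for all g₁,g₂,g₃ ∈ H, x(g₂,g₃) + x(g₁g₂,g₃) + x(g₁,g₂g₃) + x(g₁,g₂) = 0. -/
def H4 : Type := F2 × F2 × F2 × F2

instance : DecidableEq H4 := inferInstanceAs (DecidableEq (F2 × F2 × F2 × F2))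
instance : Fintype H4 := inferInstanceAs (Fintype (F2 × F2 × F2 × F2))

def hmul : H4 → H4 → H4
  | (a1,b1,c1,d1), (a2,b2,c2,d2) =>
    (a1+a2, b1+b2, c1+c2+b1*a2+b1*b2, d1+d2+a1*a2)

instance : Group H4 where
  mul := hmul
  one := ((0,0,0,0) : H4)
  inv := fun (x : F2 × F2 × F2 × F2) =>
    ((x.1, x.2.1, x.2.2.1 + x.2.1*x.1 + x.2.1*x.2.1, x.2.2.2 + x.1*x.1) : H4)
  mul_assoc := fun x y z => by
    obtain ⟨a1,b1,c1,d1⟩ := x; obtain ⟨a2,b2,c2,d2⟩ := y; obtain ⟨a3,b3,c3,d3⟩ := z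
    show hmul (hmul _ _) _ = hmul _ (hmul _ _)
    simp only [hmul]
    exact Prod.ext (by ring) (Prod.ext (by ring) (Prod.ext (by ring) (by ring)))
  one_mul := by decide
  mul_one := by decide
  inv_mul_cancel := by decide

def aH : H4 → F2 | (a,_,_,_) => a
def bH : H4 → F2 | (_,b,_,_) => b
def cH : H4 → F2 | (_,_,c,_) => c
def dH : H4 → F2 | (_,_,_,d) => d

def f4h : H4 := (0,0,0,1)

def xcoc (g1 g2 : H4) : F2 :=
  dH g1 * dH g2 + aH g1 * aH g2 * dH g2 + aH g1 * dH g1 * aH g2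

section

variable {R : Type*} [CommRing R]

def xPoly (a₁ d₁ a₂ d₂ : R) : R := d₁ * d₂ + a₁ * a₂ * d₂ + a₁ * d₁ * a₂

theorem xPoly_coboundary (a₁ d₁ a₂ d₂ a₃ d₃ : R) :
    xPoly a₂ d₂ a₃ d₃ - xPoly (a₁ + a₂) (d₁ + d₂ + a₁ * a₂) a₃ d₃
      + xPoly a₁ d₁ (a₂ + a₃) (d₂ + d₃ + a₂ * a₃) - xPoly a₁ d₁ a₂ d₂
      = a₂ * (a₁ * a₃ * (a₃ - a₁)) := by
  unfold xPoly
  ring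

end

theorem ZMod.mul_mul_sub_eq_zero_of_two (a c : ZMod 2) : a * c * (c - a) = 0 := by
  calc a * c * (c - a) = a * c ^ 2 - a ^ 2 * c := by ring
    _ = 0 := by rw [ZMod.pow_card, ZMod.pow_card, sub_self]

theorem aH_mul (g h : H4) : aH (g * h) = aH g + aH h := rfl

theorem dH_mul (g h : H4) : dH (g * h) = dH g + dH h + aH g * aH h := rfl

theorem xcoc_eq_xPoly (g h : H4) : xcoc g h = xPoly (aH g) (dH g) (aH h) (dH h) := rfl

/-- `x` is a 2-cocycle on `16Γ₂c₂` with trivial 𝔽₂ coefficients. -/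
theorem stmt_9 :
    ∀ g1 g2 g3 : H4,
      xcoc g2 g3 + xcoc (g1 * g2) g3 + xcoc g1 (g2 * g3) + xcoc g1 g2 = 0 := by
  intro g1 g2 g3
  have h := xPoly_coboundary (aH g1) (dH g1) (aH g2) (dH g2) (aH g3) (dH g3)
  rw [ZMod.mul_mul_sub_eq_zero_of_two, mul_zero, CharTwo.sub_eq_add, CharTwo.sub_eq_add] at h
  simpa only [xcoc_eq_xPoly, aH_mul, dH_mul] using h
end

section
/- Let G = 32Γ₃f on 𝔽₂⁵ with its explicit multiplication. For g = (a,b,c,d,e) ∈ G write ā(g)=a, b̄(g)=b, etc. Define x₁₂, w₁₂ : G² → 𝔽₂ by x₁₂(g₁,g₂) = d₁d₂+a₁a₂d₂+a₁d₁a₂ and w₁₂(g₁,g₂) = c₁c₂+b₁a₂c₂+b₁c₁a₂+b₁b₂c₂+b₁c₁b₂+c₁a₂+b₁a₂b₂. Define Y : G³ → 𝔽₂ by Y(g₁,g₂,g₃) = (x₁₂w₁₂ + (e₁+e₂)(x₁₂+w₁₂) + b₁c₁a₂ + b₁c₁a₂c₂ + b₁d₂ + c₁a₂c₂ + e₁a₂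 + e₁e₂)·a₃ + x₁₂(g₁,g₂)·d₃. Then Y is a 3-cocycle: δY = 0, i.e. for all g₀,g₁,g₂,g₃ ∈ G, Y(g₁,g₂,g₃) + Y(g₀g₁,g₂,g₃) + Y(g₀,g₁g₂,g₃) + Y(g₀,g₁,g₂g₃) + Y(g₀,g₁,g₂) = 0. -/
/-- Underlying set of the group `32Γ₃f`. -/
def G5 : Type := F2 × F2 × F2 × F2 × F2

instance : DecidableEq G5 := inferInstanceAs (DecidableEq (F2 × F2 × F2 × F2 × F2))
instance : Fintype G5 := inferInstanceAs (Fintype (F2 × F2 × F2 × F2 × F2))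

/-- The deviation term ẽ. -/
def Ee (a1 b1 c1 d1 a2 b2 c2 d2 : F2) : F2 :=
  d1*d2+a1*a2*d2+a1*d1*a2+c1*c2+b1*b2*c2+b1*c1*b2+b1*a2*c2+b1*c1*a2+c1*a2+b1*a2*b2

/-- Multiplication of `32Γ₃f`. -/
def gmul : G5 → G5 → G5
  | (a1,b1,c1,d1,e1), (a2,b2,c2,d2,e2) =>
    (a1+a2, b1+b2, c1+c2+b1*a2+b1*b2, d1+d2+a1*a2, e1+e2+Ee a1 b1 c1 d1 a2 b2 c2 d2)

def gone : G5 := (0,0,0,0,0)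

def ginv : G5 → G5
  | (a,b,c,d,e) =>
    (a, b, c+b*a+b*b, d+a*a, e + Ee a b c d a b (c+b*a+b*b) (d+a*a))

private lemma Ee_assoc : ∀ a1 b1 c1 d1 a2 b2 c2 d2 a3 b3 c3 d3 : F2,
    Ee a1 b1 c1 d1 a2 b2 c2 d2
      + Ee (a1+a2) (b1+b2) (c1+c2+b1*a2+b1*b2) (d1+d2+a1*a2) a3 b3 c3 d3
    = Ee a2 b2 c2 d2 a3 b3 c3 d3
      + Ee a1 b1 c1 d1 (a2+a3) (b2+b3) (c2+c3+b2*a3+b2*b3) (d2+d3+a2*a3) := by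
  have h2 : ∀ x : F2, x^2 = x := by decide
  have h3 : ∀ x : F2, x^3 = x := by decide
  have htwo : (2 : F2) = 0 := rfl
  intro a1 b1 c1 d1 a2 b2 c2 d2 a3 b3 c3 d3
  simp only [Ee]
  ring_nf
  simp only [h2, h3, htwo, zero_mul, mul_zero, zero_add, add_zero]
  linear_combination (a2*a3*b1) * htwo

private lemma gmul_assoc : ∀ x y z : G5, gmul (gmul x y) z = gmul x (gmul y z) := by
  rintro ⟨a1,b1,c1,d1,e1⟩ ⟨a2,b2,c2,d2,e2⟩ ⟨a3,b3,c3,d3,e3⟩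
  simp only [gmul]
  refine Prod.ext (by ring) (Prod.ext (by ring) (Prod.ext (by ring)
    (Prod.ext (by ring) ?_)))
  linear_combination (Ee_assoc a1 b1 c1 d1 a2 b2 c2 d2 a3 b3 c3 d3 : _)

/-- The group `32Γ₃f`. -/
instance : Group G5 where
  mul := gmul
  one := gone
  inv := ginv
  mul_assoc := gmul_assoc
  one_mul := by decide
  mul_one := by decide
  inv_mul_cancel := by decide

def f1 : G5 := (1,0,0,0,0)
def f2 : G5 := (0,1,0,0,0)
def f3 : G5 := (0,0,1,0,0)
def f4 : G5 := (0,0,0,1,0)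
def f5 : G5 := (0,0,0,0,1)

def aG : G5 → F2 | (a,_,_,_,_) => a
def bG : G5 → F2 | (_,b,_,_,_) => b
def cG : G5 → F2 | (_,_,c,_,_) => c
def dG : G5 → F2 | (_,_,_,d,_) => d
def eG : G5 → F2 | (_,_,_,_,e) => e

def x12 (g1 g2 : G5) : F2 :=
  dG g1 * dG g2 + aG g1 * aG g2 * dG g2 + aG g1 * dG g1 * aG g2

def w12 (g1 g2 : G5) : F2 :=
  cG g1 * cG g2 + bG g1 * aG g2 * cG g2 + bG g1 * cG g1 * aG g2
    + bG g1 * bG g2 * cG g2 + bG g1 * cG g1 * bG g2 + cG g1 * aG g2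
    + bG g1 * aG g2 * bG g2

/-- The explicit 3-cochain `Y` on `32Γ₃f`. -/
def Y (g1 g2 g3 : G5) : F2 :=
  (x12 g1 g2 * w12 g1 g2 + (eG g1 + eG g2) * (x12 g1 g2 + w12 g1 g2)
      + bG g1 * cG g1 * aG g2 + bG g1 * cG g1 * aG g2 * cG g2
      + bG g1 * dG g2 + cG g1 * aG g2 * cG g2 + eG g1 * aG g2
      + eG g1 * eG g2) * aG g3
    + x12 g1 g2 * dG g3


/-! Write `Y = Ya ∪ ā + x₁₂ ∪ d̄`. Here `ā` is a homomorphism and `d̄(gh) = d̄ g + d̄ h + ā g ā h`,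
so the Leibniz rule gives `δY = (δYa - x₁₂ ∪ ā) ∪ ā + δx₁₂ ∪ d̄`. The cochain `x₁₂` only sees the
quotient `(a, d) ≅ ℤ/4` and is a 2-cocycle there, and `δYa = x₁₂ ∪ ā`; both are polynomial
identities over `𝔽₂` in the coordinates of the group elements. -/

section Cochains

variable {G R : Type*} [Group G] [CommRing R]

def coboundary₂ (x : G → G → R) (g₀ g₁ g₂ : G) : R :=
  x g₁ g₂ - x (g₀ * g₁) g₂ + x g₀ (g₁ * g₂) - x g₀ g₁

def coboundary₃ (Y : G → G → G → R) (g₀ g₁ g₂ g₃ : G) : R :=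
  Y g₁ g₂ g₃ - Y (g₀ * g₁) g₂ g₃ + Y g₀ (g₁ * g₂) g₃ - Y g₀ g₁ (g₂ * g₃) + Y g₀ g₁ g₂

theorem coboundary₃_cup_add_cup {A x : G → G → R} {a d : G → R}
    (ha : ∀ g h, a (g * h) = a g + a h) (hd : ∀ g h, d (g * h) = d g + d h + a g * a h)
    (g₀ g₁ g₂ g₃ : G) :
    coboundary₃ (fun g₁ g₂ g₃ ↦ A g₁ g₂ * a g₃ + x g₁ g₂ * d g₃) g₀ g₁ g₂ g₃ =
      (coboundary₂ A g₀ g₁ g₂ - x g₀ g₁ * a g₂) * a g₃ + coboundary₂ x g₀ g₁ g₂ * d g₃ := by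
  simp only [coboundary₃, coboundary₂, ha, hd]
  ring

end Cochains

theorem F2.pow_eq_self (x : F2) {n : ℕ} (hn : n ≠ 0) : x ^ n = x := by
  obtain ⟨k, rfl⟩ := Nat.exists_eq_succ_of_ne_zero hn
  exact IsIdempotentElem.pow_succ_eq k ((sq x).symm.trans (ZMod.pow_card x))

theorem aG_mul (g h : G5) : aG (g * h) = aG g + aG h := rfl

theorem bG_mul (g h : G5) : bG (g * h) = bG g + bG h := rfl

theorem cG_mul (g h : G5) : cG (g * h) = cG g + cG h + bG g * aG h + bG g * bG h := rfl

theorem dG_mul (g h : G5) : dG (g * h) = dG g + dG h + aG g * aG h := rfl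

theorem eG_mul (g h : G5) : eG (g * h) = eG g + eG h + x12 g h + w12 g h := by
  obtain ⟨a₁, b₁, c₁, d₁, e₁⟩ := g
  obtain ⟨a₂, b₂, c₂, d₂, e₂⟩ := h
  show e₁ + e₂ + Ee a₁ b₁ c₁ d₁ a₂ b₂ c₂ d₂ = _
  simp only [x12, w12, Ee, aG, bG, cG, dG, eG]
  ring

def Ya (g₁ g₂ : G5) : F2 :=
  x12 g₁ g₂ * w12 g₁ g₂ + (eG g₁ + eG g₂) * (x12 g₁ g₂ + w12 g₁ g₂)
    + bG g₁ * cG g₁ * aG g₂ + bG g₁ * cG g₁ * aG g₂ * cG g₂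
    + bG g₁ * dG g₂ + cG g₁ * aG g₂ * cG g₂ + eG g₁ * aG g₂ + eG g₁ * eG g₂

theorem Y_eq_cup : Y = fun g₁ g₂ g₃ ↦ Ya g₁ g₂ * aG g₃ + x12 g₁ g₂ * dG g₃ := rfl

theorem coboundary₂_x12 (g₀ g₁ g₂ : G5) : coboundary₂ x12 g₀ g₁ g₂ = 0 := by
  simp only [coboundary₂, x12, aG_mul, dG_mul]
  ring_nf
  simp (disch := decide) only [F2.pow_eq_self]
  ring_nf

set_option maxRecDepth 10000 in
theorem coboundary₂_Ya (g₀ g₁ g₂ : G5) : coboundary₂ Ya g₀ g₁ g₂ = x12 g₀ g₁ * aG g₂ := by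
  simp only [coboundary₂, Ya, x12, w12, aG_mul, bG_mul, cG_mul, dG_mul, eG_mul]
  ring_nf
  simp (disch := decide) only [F2.pow_eq_self]
  ring_nf
  -- `reduce_mod_char` only recognises the type when it is literally `ZMod 2`
  unfold F2
  reduce_mod_char

/-- `Y` is a 3-cocycle on `32Γ₃f` with trivial 𝔽₂ coefficients. -/
theorem stmt_12 :
    ∀ g0 g1 g2 g3 : G5,
      Y g1 g2 g3 + Y (g0 * g1) g2 g3 + Y g0 (g1 * g2) g3
        + Y g0 g1 (g2 * g3) + Y g0 g1 g2 = 0 := by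
  intro g0 g1 g2 g3
  have h := coboundary₃_cup_add_cup (A := Ya) (x := x12) aG_mul dG_mul g0 g1 g2 g3
  rw [coboundary₂_Ya, coboundary₂_x12, sub_self, zero_mul, zero_mul, add_zero, ← Y_eq_cup] at h
  simpa only [coboundary₃, CharTwo.sub_eq_add] using h
end

section
/- Let G = 32Γ₃f on 𝔽₂⁵ with its explicit multiplication. The subset K = {(0,b,c,d,e) : b,c,d,e ∈ 𝔽₂} (elements with first coordinate a = 0) is a subgroup of G of order 16, and K is isomorphic to C₈ × C₂ (the direct product of a cyclic group of order 8 and one of order 2). -/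
/-- The subgroup `K = {(0,b,c,d,e)}` of `32Γ₃f`. -/
def K : Subgroup G5 where
  carrier := {g : G5 | aG g = 0}
  one_mem' := by decide
  mul_mem' := fun {a b} ha hb =>
    (by decide : ∀ a b : G5, aG a = 0 → aG b = 0 → aG (a * b) = 0) a b ha hb
  inv_mem' := fun {a} ha =>
    (by decide : ∀ a : G5, aG a = 0 → aG a⁻¹ = 0) a ha

/-! `f₂` has order 8 and `f₃f₄` has order 2; they commute and `f₃f₄ ∉ ⟨f₂⟩`, so `⟨f₂⟩ ⊓ ⟨f₃f₄⟩ = 1`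
and `⟨f₂⟩ ⊔ ⟨f₃f₄⟩` is the internal direct product `⟨f₂⟩ × ⟨f₃f₄⟩ ≅ C₈ × C₂`. It has order 16 and
lies in `K`, which also has order 16, so it is all of `K`. -/

open Subgroup

section InternalDirectProduct

variable {G : Type*} [Group G]

theorem disjoint_zpowers_of_orderOf_eq_prime {p : ℕ} [Fact p.Prime] {x y : G}
    (hy : orderOf y = p) (hyx : y ∉ zpowers x) : Disjoint (zpowers x) (zpowers y) := by
  rw [disjoint_def]
  intro z hzx hzy
  by_contra hz
  obtain ⟨k, hk⟩ : (⟨y, mem_zpowers y⟩ : zpowers y) ∈ zpowers ⟨z, hzy⟩ :=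
    mem_zpowers_of_prime_card (by rw [Nat.card_zpowers, hy]) (by simpa using hz)
  have hyz : y = z ^ k := congrArg Subtype.val hk.symm
  exact hyx (hyz ▸ zpow_mem hzx k)

theorem nonempty_sup_zpowers_mulEquiv {x y : G} (hxy : Commute x y)
    (hdisj : Disjoint (zpowers x) (zpowers y)) :
    Nonempty ((zpowers x ⊔ zpowers y : Subgroup G) ≃*
      Multiplicative (ZMod (orderOf x) × ZMod (orderOf y))) := by
  have hcomm : ∀ (a : zpowers x) (b : zpowers y), Commute (a : G) b := by
    rintro ⟨-, i, rfl⟩ ⟨-, j, rfl⟩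
    exact hxy.zpow_zpow i j
  have hinj := (MonoidHom.noncommCoprod_injective (zpowers x).subtype (zpowers y).subtype
    hcomm).mpr ⟨subtype_injective _, subtype_injective _, by rwa [range_subtype, range_subtype]⟩
  have hrange := MonoidHom.noncommCoprod_range (zpowers x).subtype (zpowers y).subtype hcomm
  rw [range_subtype, range_subtype] at hrange
  have cyc (g : G) : zpowers g ≃* Multiplicative (ZMod (orderOf g)) :=
    mulEquivOfCyclicCardEq ((Nat.card_zpowers g).trans (Nat.card_zmod _).symm)
  exact ⟨(MulEquiv.subgroupCongr hrange).symm.trans <| (MonoidHom.ofInjective hinj).symm.trans <|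
    (MulEquiv.prodCongr (cyc x) (cyc y)).trans (MulEquiv.prodMultiplicative _ _).symm⟩

end InternalDirectProduct

theorem orderOf_f2 : orderOf f2 = 8 :=
  orderOf_eq_prime_pow (p := 2) (n := 2) (by decide) (by decide)

theorem orderOf_f3_mul_f4 : orderOf (f3 * f4) = 2 :=
  orderOf_eq_prime (by decide) (by decide)

theorem commute_f2_f3_mul_f4 : Commute f2 (f3 * f4) :=
  show f2 * (f3 * f4) = f3 * f4 * f2 by decide

theorem f3_mul_f4_notMem_zpowers_f2 : f3 * f4 ∉ zpowers f2 := by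
  rw [mem_zpowers_iff_mem_range_orderOf, orderOf_f2]
  decide

theorem nat_card_K : Nat.card K = 16 := by
  rw [show Nat.card K = Nat.card {g : G5 // aG g = 0} from rfl, Nat.card_eq_fintype_card]
  decide

/-- The subset of `32Γ₃f` of elements with first coordinate 0 is a subgroup
of order 16 isomorphic to `C₈ × C₂`. -/
theorem stmt_13 :
    (∀ g : G5, g ∈ K ↔ aG g = 0) ∧ Nat.card K = 16 ∧
    Nonempty (K ≃* Multiplicative (ZMod 8 × ZMod 2)) := by
  have hdisj : Disjoint (zpowers f2) (zpowers (f3 * f4)) :=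
    disjoint_zpowers_of_orderOf_eq_prime orderOf_f3_mul_f4 f3_mul_f4_notMem_zpowers_f2
  obtain ⟨e⟩ := nonempty_sup_zpowers_mulEquiv commute_f2_f3_mul_f4 hdisj
  rw [orderOf_f2, orderOf_f3_mul_f4] at e
  have hle : zpowers f2 ⊔ zpowers (f3 * f4) ≤ K :=
    sup_le (zpowers_le.mpr rfl) (zpowers_le.mpr rfl)
  have hK : zpowers f2 ⊔ zpowers (f3 * f4) = K :=
    eq_of_le_of_card_ge hle <| by
      rw [nat_card_K, Nat.card_congr e.toEquiv]
      exact (show Nat.card (ZMod 8 × ZMod 2) = 16 by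
        rw [Nat.card_prod, Nat.card_zmod, Nat.card_zmod]).ge
  exact ⟨fun _ ↦ Iff.rfl, nat_card_K, ⟨(MulEquiv.subgroupCongr hK).symm.trans e⟩⟩
end

section
/- Let D be the dihedral group on 𝔽₂³ with multiplication (a₁,b₁,c₁)·(a₂,b₂,c₂) = (a₁+a₂, b₁+b₂, c₁+c₂+b₁a₂+b₁b₂). The 2-cochain α(g₁,g₂) = a₁a₂ is a 2-cocycle on D with trivial 𝔽₂-coefficients which is not a coboundary: there is no s : D → 𝔽₂ with a₁a₂ = s(g₂) + s(g₁g₂) + s(g₁) for all g₁,g₂ ∈ D. -/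
section CharTwo

variable {G R : Type*} [CommRing R] [CharP R 2]

theorem cocycle_cup_self_of_map_mul [Mul G] (u : G → R) (hu : ∀ g h, u (g * h) = u g + u h)
    (g₁ g₂ g₃ : G) :
    u g₂ * u g₃ + u (g₁ * g₂) * u g₃ + u g₁ * u (g₂ * g₃) + u g₁ * u g₂ = 0 := by
  rw [hu, hu]
  linear_combination (u g₁ * u g₂ + u g₁ * u g₃ + u g₂ * u g₃) * CharTwo.two_eq_zero (R := R)

theorem apply_self_eq_apply_one_one_of_coboundary [Monoid G] {α : G → G → R} {s : G → R}
    (hs : ∀ g h, α g h = s h + s (g * h) + s g) {t : G} (ht : t * t = 1) : α t t = α 1 1 := by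
  rw [hs, hs, ht, mul_one]
  linear_combination (s t - s 1) * CharTwo.two_eq_zero (R := R)

end CharTwo

/-- `α(g₁,g₂) = a₁a₂` is a 2-cocycle on `D₈` which is not a coboundary. -/
theorem stmt_18 :
    (∀ g1 g2 g3 : D3,
      aD g2 * aD g3 + aD (g1 * g2) * aD g3 + aD g1 * aD (g2 * g3)
        + aD g1 * aD g2 = 0) ∧
    (¬ ∃ s : D3 → F2, ∀ g1 g2 : D3,
      aD g1 * aD g2 = s g2 + s (g1 * g2) + s g1) := by
  refine ⟨cocycle_cup_self_of_map_mul aD aD_mul, ?_⟩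
  rintro ⟨s, hs⟩
  have hα := apply_self_eq_apply_one_one_of_coboundary hs (t := ((1, 0, 0) : D3)) (by decide)
  exact absurd hα (by decide)
end
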